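/- Let Ω_B = {X ∈ ℝ^{n×n} : X = Xᵀ, rank(X) ≤ r, ‖X‖_F ≤ 1} be the set of symmetric matrices of rank at most r in the Frobenius unit ball. Then for every 0 < ρ < 1 the covering number satisfies N_{Ω_B}(ρ) ≤ (r+1) · (6√r / ρ)^{n r}. -/

import Mathlib

/-!
By the spectral theorem, `X = V * diagonal λ * Vᵀ = W * D * Wᵀ` with `W = V * diagonal √|λ|` and
`D` a diagonal sign matrix; only the `rank X ≤ r` nonzero columns of `W` matter, and by
Cauchy–Schwarz `‖W‖² = ∑ |λᵢ| ≤ √r * ‖X‖ ≤ √r`. Permuting the columns sorts the signs, so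
`W ∈ ℝ^{n×r}` lies in the ball of radius `R = r^{1/4}` and `D` is one of `r + 1` sign patterns.
For each pattern, `W ↦ W * D * Wᵀ` is `2R`-Lipschitz on that ball, and a maximal `ε`-separated
subset of the ball is an `ε`-net with at most `(1 + 2R/ε)^{nr}` points by a volume comparison;
`ε = ρ / (2R)` gives the bound.
-/

open Matrix

noncomputable def coveringNumber {E : Type*} [PseudoMetricSpace E] (Ω : Set E) (ρ : ℝ) : ℕ :=
  sInf {k : ℕ | ∃ C : Finset E, C.card = k ∧ Ω ⊆ ⋃ c ∈ C, Metric.closedBall c ρ}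

attribute [local instance] Matrix.frobeniusNormedAddCommGroup

attribute [local instance] Matrix.frobeniusNormedSpace

open Metric MeasureTheory

theorem coveringNumber_le_card {E : Type*} [PseudoMetricSpace E] {Ω : Set E} {ρ : ℝ}
    {C : Finset E} (h : Ω ⊆ ⋃ c ∈ C, closedBall c ρ) : coveringNumber Ω ρ ≤ C.card :=
  Nat.sInf_le ⟨C, rfl, h⟩

section Net

variable {E : Type*} [NormedAddCommGroup E] [NormedSpace ℝ E] [FiniteDimensional ℝ E]

theorem card_le_of_pairwise_lt_dist {x : E} {R ε : ℝ} (hR : 0 ≤ R) (hε : 0 < ε) {S : Finset E}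
    (hS : ↑S ⊆ closedBall x R) (hsep : (S : Set E).Pairwise fun y z => ε < dist y z) :
    (S.card : ℝ) ≤ (1 + 2 * R / ε) ^ Module.finrank ℝ E := by
  borelize E
  set μ : Measure E := (Module.finBasis ℝ E).addHaar
  have hdisj : (S : Set E).PairwiseDisjoint fun c => closedBall c (ε / 2) :=
    fun y hy z hz hyz => closedBall_disjoint_closedBall (by linarith [hsep hy hz hyz])
  have hsub : (⋃ c ∈ S, closedBall c (ε / 2)) ⊆ closedBall x (R + ε / 2) :=
    Set.iUnion₂_subset fun c hc =>
      closedBall_subset_closedBall' (by linarith [mem_closedBall.1 (hS hc)])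
  have hunit : 0 < μ.real (ball 0 1) :=
    ENNReal.toReal_pos (measure_ball_pos μ _ one_pos).ne' measure_ball_lt_top.ne
  -- the disjoint balls of radius `ε / 2` around `S` fit in the ball of radius `R + ε / 2`
  have hvol : S.card * (ε / 2) ^ Module.finrank ℝ E ≤ (R + ε / 2) ^ Module.finrank ℝ E := by
    refine le_of_mul_le_mul_right ?_ hunit
    calc S.card * (ε / 2) ^ Module.finrank ℝ E * μ.real (ball 0 1)
        = ∑ c ∈ S, μ.real (closedBall c (ε / 2)) := by
          simp [μ.addHaar_real_closedBall _ (by positivity : 0 ≤ ε / 2), mul_assoc]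
      _ = μ.real (⋃ c ∈ S, closedBall c (ε / 2)) :=
          (measureReal_biUnion_finset hdisj (fun _ _ => measurableSet_closedBall)
            fun _ _ => measure_closedBall_lt_top.ne).symm
      _ ≤ μ.real (closedBall x (R + ε / 2)) := measureReal_mono hsub measure_closedBall_lt_top.ne
      _ = (R + ε / 2) ^ Module.finrank ℝ E * μ.real (ball 0 1) :=
          μ.addHaar_real_closedBall _ (by positivity)
  calc (S.card : ℝ) ≤ (R + ε / 2) ^ Module.finrank ℝ E / (ε / 2) ^ Module.finrank ℝ E := by
        rwa [le_div_iff₀ (by positivity)]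
    _ = (1 + 2 * R / ε) ^ Module.finrank ℝ E := by
        rw [← div_pow]; congr 1; field_simp; ring

theorem exists_finset_subset_closedBall_cover {x : E} {R ε : ℝ} (hR : 0 ≤ R) (hε : 0 < ε) :
    ∃ C : Finset E, ↑C ⊆ closedBall x R ∧
      (C.card : ℝ) ≤ (1 + 2 * R / ε) ^ Module.finrank ℝ E ∧
      closedBall x R ⊆ ⋃ c ∈ C, closedBall c ε := by
  classical
  set 𝒮 : Set (Finset E) :=
    {S | ↑S ⊆ closedBall x R ∧ (S : Set E).Pairwise fun y z => ε < dist y z}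
  have hbdd : BddAbove (Finset.card '' 𝒮) := by
    refine ⟨⌈(1 + 2 * R / ε) ^ Module.finrank ℝ E⌉₊, ?_⟩
    rintro _ ⟨S, hS, rfl⟩
    exact_mod_cast (card_le_of_pairwise_lt_dist hR hε hS.1 hS.2).trans (Nat.le_ceil _)
  -- a separated set of maximal cardinality is a net
  obtain ⟨S, hS, hcard⟩ :=
    Nat.sSup_mem (s := Finset.card '' 𝒮) ⟨0, ∅, by simp [𝒮], rfl⟩ hbdd
  refine ⟨S, hS.1, card_le_of_pairwise_lt_dist hR hε hS.1 hS.2, fun y hy => ?_⟩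
  by_contra hcov
  simp only [Set.mem_iUnion, mem_closedBall, not_exists, not_le] at hcov
  have hyS : y ∉ S := fun h => by linarith [hcov y h, dist_self y]
  have hins : insert y S ∈ 𝒮 := by
    refine ⟨by simpa [Set.insert_subset_iff] using ⟨hy, hS.1⟩, ?_⟩
    rw [Finset.coe_insert, Set.pairwise_insert]
    exact ⟨hS.2, fun z hz _ => ⟨hcov z hz, dist_comm y z ▸ hcov z hz⟩⟩
  have := le_csSup hbdd ⟨_, hins, rfl⟩
  rw [Finset.card_insert_of_notMem hyS, hcard] at this
  omega

end Net

def signPattern {r : ℕ} (k : Fin (r + 1)) (j : Fin r) : ℝ := if (j : ℕ) < k then -1 else 1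

theorem abs_signPattern {r : ℕ} (k : Fin (r + 1)) (j : Fin r) : |signPattern k j| = 1 := by
  unfold signPattern; split_ifs <;> simp

theorem Monotone.exists_eq_signPattern {r : ℕ} {g : Fin r → ℝ} (hg : Monotone g)
    (habs : ∀ j, |g j| = 1) : ∃ k : Fin (r + 1), g = signPattern k := by
  classical
  set s := Finset.univ.filter fun j => g j < 0
  have hlt : ∀ j : Fin r, (j : ℕ) < s.card ↔ g j < 0 := by
    refine fun j => ⟨fun hj => ?_, fun hj => ?_⟩
    · by_contra! hpos
      have hsub : s ⊆ Finset.Iio j := fun i hi => by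
        simp only [s, Finset.mem_filter, Finset.mem_univ, true_and] at hi
        exact Finset.mem_Iio.2 (lt_of_not_ge fun hji => (hg hji).not_gt (hi.trans_le hpos))
      have := Finset.card_le_card hsub
      simp only [Fin.card_Iio] at this
      omega
    · have hsub : Finset.Iic j ⊆ s := fun i hi => by
        simp only [s, Finset.mem_filter, Finset.mem_univ, true_and]
        exact (hg (Finset.mem_Iic.1 hi)).trans_lt hj
      have := Finset.card_le_card hsub
      simp only [Fin.card_Iic] at this
      omega
  refine ⟨⟨s.card, Nat.lt_succ_of_le ((Finset.card_le_univ s).trans_eq (Fintype.card_fin r))⟩,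
    funext fun j => ?_⟩
  simp only [signPattern, hlt]
  rcases (abs_eq zero_le_one).1 (habs j) with h | h <;> simp [h]

theorem exists_equiv_comp_eq_signPattern {r : ℕ} {ι : Type*} (e : Fin r ≃ ι) {t : ι → ℝ}
    (ht : ∀ i, |t i| = 1) : ∃ (σ : Fin r ≃ ι) (k : Fin (r + 1)), t ∘ σ = signPattern k :=
  ⟨(Tuple.sort (t ∘ e)).trans e,
    (Tuple.monotone_sort (t ∘ e)).exists_eq_signPattern fun _ => ht _⟩

namespace Matrix

variable {l m n κ κ' : Type*} [Fintype κ] [Fintype κ'] {f : κ' → κ}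

theorem submatrix_mul_diagonal_mul_transpose {R : Type*} [CommSemiring R] [DecidableEq κ]
    [DecidableEq κ'] (hf : f.Injective) {W : Matrix m κ R}
    (hW : ∀ i j, j ∉ Set.range f → W i j = 0) (d : κ → R) :
    W.submatrix id f * diagonal (d ∘ f) * (W.submatrix id f)ᵀ = W * diagonal d * Wᵀ := by
  ext i i'
  rw [mul_apply, mul_apply]
  simp only [mul_diagonal, submatrix_apply, transpose_apply, id, Function.comp_apply]
  exact Fintype.sum_of_injective f hf _ _ (fun j hj => by simp [hW i j hj]) fun _ => rfl

variable [Fintype l] [Fintype m] [Fintype n]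

theorem frobenius_norm_sq_eq_sum (A : Matrix m n ℝ) : ‖A‖ ^ 2 = ∑ i, ∑ j, A i j ^ 2 := by
  rw [frobenius_norm_def, ← Real.sqrt_eq_rpow, Real.sq_sqrt (by positivity)]
  simp

theorem frobenius_norm_sq_eq_trace (A : Matrix m n ℝ) : ‖A‖ ^ 2 = trace (Aᵀ * A) := by
  rw [frobenius_norm_sq_eq_sum, Finset.sum_comm]
  simp [trace, mul_apply, sq]

theorem frobenius_norm_mul_of_transpose_mul_self [DecidableEq m] {V : Matrix l m ℝ}
    (hV : Vᵀ * V = 1) (A : Matrix m n ℝ) : ‖V * A‖ = ‖A‖ := by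
  rw [← sq_eq_sq₀ (norm_nonneg _) (norm_nonneg _), frobenius_norm_sq_eq_trace,
    frobenius_norm_sq_eq_trace, transpose_mul, Matrix.mul_assoc, ← Matrix.mul_assoc Vᵀ, hV,
    Matrix.one_mul]

theorem frobenius_norm_sq_diagonal [DecidableEq m] (v : m → ℝ) :
    ‖diagonal v‖ ^ 2 = ∑ i, v i ^ 2 := by
  simp [frobenius_norm_diagonal, EuclideanSpace.norm_sq_eq]

theorem frobenius_norm_mul_diagonal_le [DecidableEq n] (A : Matrix m n ℝ) {d : n → ℝ}
    (hd : ∀ j, |d j| ≤ 1) : ‖A * diagonal d‖ ≤ ‖A‖ := by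
  rw [← sq_le_sq₀ (norm_nonneg _) (norm_nonneg _), frobenius_norm_sq_eq_sum,
    frobenius_norm_sq_eq_sum]
  refine Finset.sum_le_sum fun i _ => Finset.sum_le_sum fun j _ => ?_
  rw [mul_diagonal, mul_pow, ← sq_abs (d j)]
  exact mul_le_of_le_one_right (sq_nonneg _) (pow_le_one₀ (abs_nonneg _) (hd j))

theorem frobenius_norm_mul_diagonal_mul_transpose_sub_le [DecidableEq κ] (W U : Matrix m κ ℝ)
    {d : κ → ℝ} (hd : ∀ j, |d j| ≤ 1) :
    ‖W * diagonal d * Wᵀ - U * diagonal d * Uᵀ‖ ≤ (‖W‖ + ‖U‖) * ‖W - U‖ := by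
  have hsplit : W * diagonal d * Wᵀ - U * diagonal d * Uᵀ =
      (W - U) * diagonal d * Wᵀ + U * diagonal d * (W - U)ᵀ := by
    simp only [transpose_sub, Matrix.sub_mul, Matrix.mul_sub]
    abel
  rw [hsplit]
  calc _ ≤ ‖(W - U) * diagonal d‖ * ‖Wᵀ‖ + ‖U * diagonal d‖ * ‖(W - U)ᵀ‖ :=
        (norm_add_le _ _).trans (add_le_add (frobenius_norm_mul _ _) (frobenius_norm_mul _ _))
    _ ≤ ‖W - U‖ * ‖W‖ + ‖U‖ * ‖W - U‖ := by
        rw [frobenius_norm_transpose, frobenius_norm_transpose]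
        gcongr <;> exact frobenius_norm_mul_diagonal_le _ hd
    _ = (‖W‖ + ‖U‖) * ‖W - U‖ := by ring

theorem frobenius_norm_submatrix (hf : f.Injective) {W : Matrix m κ ℝ}
    (hW : ∀ i j, j ∉ Set.range f → W i j = 0) : ‖W.submatrix id f‖ = ‖W‖ := by
  rw [← sq_eq_sq₀ (norm_nonneg _) (norm_nonneg _), frobenius_norm_sq_eq_sum,
    frobenius_norm_sq_eq_sum]
  refine Finset.sum_congr rfl fun i _ => ?_
  exact Fintype.sum_of_injective f hf _ _ (fun j hj => by simp [hW i j hj]) fun _ => rfl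

namespace IsHermitian

variable [DecidableEq m] {X : Matrix m m ℝ} (hX : X.IsHermitian)
include hX

theorem transpose_eigenvectorUnitary_mul_self :
    (hX.eigenvectorUnitary : Matrix m m ℝ)ᵀ * hX.eigenvectorUnitary = 1 :=
  Unitary.coe_star_mul_self hX.eigenvectorUnitary

theorem eq_eigenvectorUnitary_mul_diagonal_mul_transpose :
    X = hX.eigenvectorUnitary * diagonal hX.eigenvalues *
      (hX.eigenvectorUnitary : Matrix m m ℝ)ᵀ := by
  conv_lhs => rw [hX.spectral_theorem, Unitary.conjStarAlgAut_apply]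
  rfl

theorem frobenius_norm_sq_eq_sum_eigenvalues_sq : ‖X‖ ^ 2 = ∑ i, hX.eigenvalues i ^ 2 := by
  have hV := hX.transpose_eigenvectorUnitary_mul_self
  have hnorm : ‖X‖ = ‖diagonal hX.eigenvalues‖ := by
    conv_lhs => rw [hX.eq_eigenvectorUnitary_mul_diagonal_mul_transpose]
    rw [Matrix.mul_assoc, frobenius_norm_mul_of_transpose_mul_self hV,
      ← frobenius_norm_transpose, transpose_mul, transpose_transpose,
      frobenius_norm_mul_of_transpose_mul_self hV, diagonal_transpose]
  rw [hnorm, frobenius_norm_sq_diagonal]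

theorem sum_abs_eigenvalues_le : ∑ i, |hX.eigenvalues i| ≤ √(X.rank : ℝ) * ‖X‖ := by
  classical
  set s := Finset.univ.filter fun i => hX.eigenvalues i ≠ 0
  have hcard : s.card = X.rank := by rw [hX.rank_eq_card_non_zero_eigs, Fintype.card_subtype]
  have hsupp : ∑ i ∈ s, |hX.eigenvalues i| = ∑ i, |hX.eigenvalues i| :=
    Finset.sum_filter_of_ne fun i _ h => abs_ne_zero.1 h
  refine le_of_pow_le_pow_left₀ two_ne_zero (by positivity) ?_
  calc (∑ i, |hX.eigenvalues i|) ^ 2 ≤ s.card * ∑ i ∈ s, |hX.eigenvalues i| ^ 2 := by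
        rw [← hsupp]; exact sq_sum_le_card_mul_sum_sq
    _ ≤ X.rank * ‖X‖ ^ 2 := by
        rw [hcard, hX.frobenius_norm_sq_eq_sum_eigenvalues_sq]
        gcongr
        simpa only [sq_abs] using Finset.sum_le_sum_of_subset_of_nonneg (Finset.subset_univ s)
          fun i _ _ => sq_nonneg (hX.eigenvalues i)
    _ = (√(X.rank : ℝ) * ‖X‖) ^ 2 := by rw [mul_pow, Real.sq_sqrt (Nat.cast_nonneg _)]

-- `W = V * diagonal √|λ|` and `s = ±1`, from `λ = √|λ| * s * √|λ|`.
theorem exists_eq_mul_diagonal_mul_transpose :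
    ∃ (W : Matrix m m ℝ) (s : m → ℝ), (∀ j, |s j| = 1) ∧
      (∀ i j, hX.eigenvalues j = 0 → W i j = 0) ∧ ‖W‖ ^ 2 = ∑ i, |hX.eigenvalues i| ∧
      X = W * diagonal s * Wᵀ := by
  set V : Matrix m m ℝ := (hX.eigenvectorUnitary : Matrix m m ℝ)
  set t : m → ℝ := fun i => √|hX.eigenvalues i|
  refine ⟨V * diagonal t, fun i => if hX.eigenvalues i < 0 then -1 else 1,
    fun j => by dsimp only; split_ifs <;> simp, fun i j hj => by simp [t, hj], ?_, ?_⟩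
  · rw [frobenius_norm_mul_of_transpose_mul_self hX.transpose_eigenvectorUnitary_mul_self,
      frobenius_norm_sq_diagonal]
    simp [t, Real.sq_sqrt (abs_nonneg _)]
  · calc X = V * diagonal hX.eigenvalues * Vᵀ :=
          hX.eq_eigenvectorUnitary_mul_diagonal_mul_transpose
      _ = V * (diagonal t * diagonal (fun i => if hX.eigenvalues i < 0 then -1 else 1) *
            diagonal t) * Vᵀ := by
          rw [diagonal_mul_diagonal, diagonal_mul_diagonal]
          congr 3; ext i
          rw [mul_right_comm, Real.mul_self_sqrt (abs_nonneg _)]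
          split_ifs with h
          · rw [abs_of_neg h]; ring
          · rw [abs_of_nonneg (not_lt.1 h), mul_one]
      _ = _ := by simp only [transpose_mul, diagonal_transpose, Matrix.mul_assoc]

end IsHermitian

end Matrix

theorem exists_mul_signPattern_mul_transpose_eq {m κ : Type*} [Fintype m] [Fintype κ]
    [DecidableEq κ] {r : ℕ} {p : κ → Prop} [DecidablePred p] (hp : Fintype.card {j // p j} ≤ r)
    {W : Matrix m κ ℝ} (hW : ∀ i j, ¬ p j → W i j = 0) {s : κ → ℝ} (hs : ∀ j, |s j| = 1) :
    ∃ (k : Fin (r + 1)) (W' : Matrix m (Fin r) ℝ),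
      ‖W'‖ = ‖W‖ ∧ W' * diagonal (signPattern k) * W'ᵀ = W * diagonal s * Wᵀ := by
  -- drop the zero columns, pad with zero columns up to `r`, then sort the signs
  set W₁ : Matrix m ({j // p j} ⊕ Fin (r - Fintype.card {j // p j})) ℝ :=
    fromCols (W.submatrix id Subtype.val) 0
  have hval : ∀ i j, j ∉ Set.range (Subtype.val : {j // p j} → κ) → W i j = 0 :=
    fun i j hj => hW i j fun hpj => hj ⟨⟨j, hpj⟩, rfl⟩
  have hinl : ∀ i j, j ∉ Set.range Sum.inl → W₁ i j = 0 := by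
    rintro i (j | j) hj
    exacts [(hj ⟨j, rfl⟩).elim, rfl]
  have hW₁ : W₁.submatrix id Sum.inl = W.submatrix id Subtype.val := rfl
  obtain ⟨σ, k, hσ⟩ := exists_equiv_comp_eq_signPattern
    (Fintype.equivOfCardEq (α := Fin r) (β := {j // p j} ⊕ Fin (r - Fintype.card {j // p j}))
      (by simp only [Fintype.card_sum, Fintype.card_fin]; omega))
    (t := Sum.elim (s ∘ Subtype.val) 1) (by rintro (j | j) <;> simp [hs])
  have hσW : ∀ i j, j ∉ Set.range σ → W₁ i j = 0 := fun _ j hj => (hj (σ.surjective j)).elim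
  refine ⟨k, W₁.submatrix id σ, ?_, ?_⟩
  · rw [frobenius_norm_submatrix σ.injective hσW,
      ← frobenius_norm_submatrix Sum.inl_injective hinl, hW₁,
      frobenius_norm_submatrix Subtype.val_injective hval]
  · rw [← hσ, submatrix_mul_diagonal_mul_transpose σ.injective hσW,
      ← submatrix_mul_diagonal_mul_transpose Sum.inl_injective hinl, hW₁]
    exact submatrix_mul_diagonal_mul_transpose Subtype.val_injective hval s

theorem exists_eq_mul_signPattern_mul_transpose {m : Type*} [Fintype m] [DecidableEq m]
    {X : Matrix m m ℝ} (hX : X.IsHermitian) {r : ℕ} (hrank : X.rank ≤ r) :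
    ∃ (k : Fin (r + 1)) (W : Matrix m (Fin r) ℝ),
      ‖W‖ ^ 2 ≤ √(r : ℝ) * ‖X‖ ∧ X = W * diagonal (signPattern k) * Wᵀ := by
  classical
  obtain ⟨W₀, s, hs, hW₀, hnorm, hX₀⟩ := hX.exists_eq_mul_diagonal_mul_transpose
  have hcard : Fintype.card {j // hX.eigenvalues j ≠ 0} ≤ r :=
    hX.rank_eq_card_non_zero_eigs ▸ hrank
  obtain ⟨k, W, hW, hWX⟩ :=
    exists_mul_signPattern_mul_transpose_eq hcard (fun i j hj => hW₀ i j (not_not.1 hj)) hs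
  refine ⟨k, W, ?_, hX₀.trans hWX.symm⟩
  rw [hW, hnorm]
  exact hX.sum_abs_eigenvalues_le.trans (by gcongr)

theorem coveringNumber_le_of_forall_eq_mul_diagonal_mul_transpose {m κ K : Type*} [Fintype m]
    [Fintype κ] [DecidableEq κ] [Fintype K] {d : K → κ → ℝ} (hd : ∀ k j, |d k j| ≤ 1)
    {Ω : Set (Matrix m m ℝ)} {R ρ : ℝ} (hR : 0 ≤ R) (hρ : 0 < ρ)
    (hΩ : ∀ X ∈ Ω, ∃ k, ∃ W : Matrix m κ ℝ, ‖W‖ ≤ R ∧ X = W * diagonal (d k) * Wᵀ) :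
    (coveringNumber Ω ρ : ℝ) ≤
      Fintype.card K * (1 + 4 * R ^ 2 / ρ) ^ (Fintype.card m * Fintype.card κ) := by
  classical
  obtain ⟨ε, hε, hερ, hεR⟩ : ∃ ε > 0, 2 * R * ε ≤ ρ ∧ 1 + 2 * R / ε = 1 + 4 * R ^ 2 / ρ := by
    rcases hR.eq_or_lt with rfl | hR
    · exact ⟨1, one_pos, by simp [hρ.le], by simp⟩
    · exact ⟨ρ / (2 * R), by positivity, (mul_div_cancel₀ ρ (by positivity)).le,
        by field_simp; ring⟩
  obtain ⟨C, hCR, hCcard, hCcov⟩ :=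
    exists_finset_subset_closedBall_cover (E := Matrix m κ ℝ) (x := 0) hR hε
  rw [Module.finrank_matrix, Module.finrank_self, mul_one, hεR] at hCcard
  set centers := ((Finset.univ : Finset K) ×ˢ C).image fun kU : K × Matrix m κ ℝ =>
    kU.2 * diagonal (d kU.1) * kU.2ᵀ
  have hcover : Ω ⊆ ⋃ c ∈ centers, closedBall c ρ := by
    intro X hX
    obtain ⟨k, W, hW, rfl⟩ := hΩ X hX
    obtain ⟨U, hU, hWU⟩ : ∃ U ∈ C, W ∈ closedBall U ε := by
      simpa using hCcov (mem_closedBall_zero_iff.2 hW)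
    refine Set.mem_biUnion (Finset.mem_image.2 ⟨(k, U), Finset.mem_product.2
      ⟨Finset.mem_univ k, hU⟩, rfl⟩) (mem_closedBall.2 ?_)
    rw [dist_eq_norm]
    calc _ ≤ (‖W‖ + ‖U‖) * ‖W - U‖ :=
          frobenius_norm_mul_diagonal_mul_transpose_sub_le W U (hd k)
      _ ≤ (R + R) * ε := by
          gcongr
          · exact mem_closedBall_zero_iff.1 (hCR hU)
          · rwa [← dist_eq_norm, ← mem_closedBall]
      _ ≤ ρ := by linarith
  calc (coveringNumber Ω ρ : ℝ) ≤ centers.card := by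
        exact_mod_cast coveringNumber_le_card hcover
    _ ≤ ((Finset.univ : Finset K) ×ˢ C).card := by exact_mod_cast Finset.card_image_le
    _ = Fintype.card K * C.card := by simp
    _ ≤ _ := by gcongr

/-- covering number of the set of symmetric rank-`≤ r` matrices in the
Frobenius unit ball. -/
theorem covering_symm_lowrank_ball {n r : ℕ} (ρ : ℝ) (hρ₀ : 0 < ρ) (hρ₁ : ρ < 1) :
    (coveringNumber {X : Matrix (Fin n) (Fin n) ℝ | X = Xᵀ ∧ X.rank ≤ r ∧ ‖X‖ ≤ 1} ρ : ℝ)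
      ≤ (r + 1) * (6 * Real.sqrt r / ρ) ^ (n * r) := by
  have hdecomp : ∀ X ∈ {X : Matrix (Fin n) (Fin n) ℝ | X = Xᵀ ∧ X.rank ≤ r ∧ ‖X‖ ≤ 1},
      ∃ k : Fin (r + 1), ∃ W : Matrix (Fin n) (Fin r) ℝ,
        ‖W‖ ≤ √(√(r : ℝ)) ∧ X = W * diagonal (signPattern k) * Wᵀ := by
    rintro X ⟨hsymm, hrank, hnorm⟩
    obtain ⟨k, W, hW, hWX⟩ := exists_eq_mul_signPattern_mul_transpose
      ((conjTranspose_eq_transpose_of_trivial X).trans hsymm.symm) hrank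
    refine ⟨k, W, (Real.le_sqrt (norm_nonneg _) (Real.sqrt_nonneg _)).2 ?_, hWX⟩
    exact hW.trans (mul_le_of_le_one_right (Real.sqrt_nonneg _) hnorm)
  have hcover := coveringNumber_le_of_forall_eq_mul_diagonal_mul_transpose
    (fun k j => (abs_signPattern k j).le) (Real.sqrt_nonneg _) hρ₀ hdecomp
  rw [Real.sq_sqrt (Real.sqrt_nonneg _)] at hcover
  refine hcover.trans ?_
  obtain rfl | hr := Nat.eq_zero_or_pos r
  · simp
  simp only [Fintype.card_fin, Nat.cast_add, Nat.cast_one]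
  gcongr
  have h2 : 1 ≤ 2 * √(r : ℝ) / ρ := by
    rw [le_div_iff₀ hρ₀]
    linarith [Real.one_le_sqrt.2 (Nat.one_le_cast.2 hr)]
  rw [show 6 * √(r : ℝ) / ρ = 2 * √(r : ℝ) / ρ + 4 * √(r : ℝ) / ρ by ring]
  linarith
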